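/- Let Σ̂^{Th} and Σ be symmetric J×J matrices whose entries satisfy: Σ̂^{Th}_{jk} = σ̂_{jk} 1{|σ̂_{jk}| ≥ ω θ̂_{jk}}, |σ̂_{jk} − σ_{jk}| ≤ b for all j,k, ω θ̂_{jk} > 2b, θ̂_{jk} ≤ C_U, and each row of Σ has at most s nonzero entries. Then ‖Σ̂^{Th} − Σ‖₂ ≤ max_j Σ_k |Σ̂^{Th}_{jk} − σ_{jk}| ≤ (2b + C_U ω) s. -/

import Mathlib

/-!
Entry by entry, a surviving entry `σ̂_jk` is within `b` of `σ_jk`, while a killed one leaves the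
error `|σ_jk| < b + ω θ̂_jk`; and an entry with `σ_jk = 0` is always killed, since then
`|σ̂_jk| ≤ b < ω θ̂_jk`. So each row of `Σ̂ᵀʰ - Σ` has at most `s` nonzero entries, each at most
`2b + C_U ω`. The spectral norm of a symmetric matrix is at most its largest absolute row sum by
Schur's test: Cauchy–Schwarz with weights `|a_jk|` bounds `‖A‖₂²` by the largest row sum times the
largest column sum.
-/

noncomputable def specNorm {J : ℕ} (A : Matrix (Fin J) (Fin J) ℝ) : ℝ :=
  ‖Matrix.toEuclideanCLM (𝕜 := ℝ) A‖

open Finset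

theorem norm_sum_mul_sq_le {ι 𝕜 : Type*} [Fintype ι] [RCLike 𝕜] (a x : ι → 𝕜) :
    ‖∑ k, a k * x k‖ ^ 2 ≤ (∑ k, ‖a k‖) * ∑ k, ‖a k‖ * ‖x k‖ ^ 2 :=
  calc ‖∑ k, a k * x k‖ ^ 2 ≤ (∑ k, ‖a k‖ * ‖x k‖) ^ 2 := by
        gcongr
        simpa only [norm_mul] using norm_sum_le univ fun k => a k * x k
    _ ≤ (∑ k, ‖a k‖) * ∑ k, ‖a k‖ * ‖x k‖ ^ 2 :=
        sum_sq_le_sum_mul_sum_of_sq_le_mul _ (fun _ _ => norm_nonneg _)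
          (fun _ _ => by positivity) (fun _ _ => le_of_eq (by ring))

namespace Matrix

variable {𝕜 n : Type*} [RCLike 𝕜] [Fintype n] [DecidableEq n]

theorem norm_toEuclideanCLM_le_sqrt_of_sum_norm_le (A : Matrix n n 𝕜) {R C : ℝ} (hR : 0 ≤ R)
    (hrow : ∀ i, ∑ j, ‖A i j‖ ≤ R) (hcol : ∀ j, ∑ i, ‖A i j‖ ≤ C) :
    ‖toEuclideanCLM (𝕜 := 𝕜) A‖ ≤ √(R * C) := by
  refine ContinuousLinearMap.opNorm_le_bound _ (Real.sqrt_nonneg _) fun x => ?_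
  have hsq : ‖toEuclideanCLM (𝕜 := 𝕜) A x‖ ^ 2 ≤ R * C * ‖x‖ ^ 2 :=
    calc ‖toEuclideanCLM (𝕜 := 𝕜) A x‖ ^ 2 = ∑ i, ‖∑ j, A i j * x j‖ ^ 2 := by
          simp only [EuclideanSpace.norm_sq_eq, ofLp_toEuclideanCLM, mulVec, dotProduct]
      _ ≤ ∑ i, (∑ j, ‖A i j‖) * ∑ j, ‖A i j‖ * ‖x j‖ ^ 2 :=
          sum_le_sum fun i _ => norm_sum_mul_sq_le _ _
      _ ≤ ∑ i, R * ∑ j, ‖A i j‖ * ‖x j‖ ^ 2 := by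
          gcongr with i; exact hrow i
      _ = R * ∑ j, (∑ i, ‖A i j‖) * ‖x j‖ ^ 2 := by
          simp only [← mul_sum, sum_mul]; rw [sum_comm]
      _ ≤ R * ∑ j, C * ‖x j‖ ^ 2 := by
          gcongr with j; exact hcol j
      _ = R * C * ‖x‖ ^ 2 := by
          rw [EuclideanSpace.norm_sq_eq, ← mul_sum, mul_assoc]
  calc ‖toEuclideanCLM (𝕜 := 𝕜) A x‖ = √(‖toEuclideanCLM (𝕜 := 𝕜) A x‖ ^ 2) :=
        (Real.sqrt_sq (norm_nonneg _)).symm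
    _ ≤ √(R * C * ‖x‖ ^ 2) := Real.sqrt_le_sqrt hsq
    _ = √(R * C) * ‖x‖ := by rw [Real.sqrt_mul' _ (by positivity), Real.sqrt_sq (norm_nonneg _)]

theorem IsHermitian.norm_toEuclideanCLM_le_of_sum_norm_le {A : Matrix n n 𝕜} (hA : A.IsHermitian)
    {M : ℝ} (hM : 0 ≤ M) (hrow : ∀ i, ∑ j, ‖A i j‖ ≤ M) : ‖toEuclideanCLM (𝕜 := 𝕜) A‖ ≤ M := by
  have hcol : ∀ j, ∑ i, ‖A i j‖ ≤ M := fun j =>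
    calc ∑ i, ‖A i j‖ = ∑ i, ‖A j i‖ := sum_congr rfl fun i _ => by rw [← hA.apply, norm_star]
      _ ≤ M := hrow j
  simpa only [Real.sqrt_mul_self hM] using
    A.norm_toEuclideanCLM_le_sqrt_of_sum_norm_le hM hrow hcol

end Matrix

theorem Finset.sum_le_card_filter_ne_zero_nsmul {ι R M : Type*} [Fintype ι] [Zero R] [DecidableEq R]
    [AddCommMonoid M] [Preorder M] [AddLeftMono M] {f : ι → M} {g : ι → R} {c : M}
    (hfg : ∀ i, g i = 0 → f i = 0) (hf : ∀ i, f i ≤ c) :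
    ∑ i, f i ≤ #{i | g i ≠ 0} • c := by
  rw [← sum_filter_of_ne fun i _ hi => mt (hfg i) hi]
  exact sum_le_card_nsmul _ _ _ fun i _ => hf i

noncomputable def hardThreshold (t x : ℝ) : ℝ := if t ≤ |x| then x else 0

theorem hardThreshold_of_abs_lt {t x : ℝ} (h : |x| < t) : hardThreshold t x = 0 :=
  if_neg h.not_ge

theorem abs_hardThreshold_sub_le {t x y b : ℝ} (hxy : |x - y| ≤ b) (ht : 0 ≤ t) :
    |hardThreshold t x - y| ≤ b + t := by
  unfold hardThreshold
  split_ifs with h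
  · linarith
  · have := abs_sub_abs_le_abs_sub y x
    rw [zero_sub, abs_neg]
    linarith [abs_sub_comm x y]

theorem thresholding_spectral_bound_general {J : ℕ}
    (SThat S σhat θhat : Matrix (Fin J) (Fin J) ℝ)
    (hSThat : SThat.IsHermitian) (hS : S.IsHermitian)
    (b ω CU : ℝ) (hb : 0 < b) (hω : 0 < ω) (hCU : 0 < CU) (s : ℕ)
    (hdef : ∀ j k, SThat j k = if ω * θhat j k ≤ |σhat j k| then σhat j k else 0)
    (hest : ∀ j k, |σhat j k - S j k| ≤ b)
    (hθlow : ∀ j k, 2 * b < ω * θhat j k)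
    (hθhigh : ∀ j k, θhat j k ≤ CU)
    (hsparse : ∀ j, (Finset.univ.filter fun k => S j k ≠ 0).card ≤ s) :
    specNorm (SThat - S) ≤ (⨆ j, ∑ k, |SThat j k - S j k|) ∧
      (⨆ j, ∑ k, |SThat j k - S j k|) ≤ (2 * b + CU * ω) * s := by
  have hSThat_eq (j k) : SThat j k = hardThreshold (ω * θhat j k) (σhat j k) := hdef j k
  have hentry (j k) : |SThat j k - S j k| ≤ 2 * b + CU * ω := by
    rw [hSThat_eq]
    refine (abs_hardThreshold_sub_le (hest j k) (by linarith [hθlow j k])).trans ?_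
    linarith [mul_le_mul_of_nonneg_left (hθhigh j k) hω.le]
  have hzero (j k) (h : S j k = 0) : |SThat j k - S j k| = 0 := by
    have hσ : |σhat j k| < ω * θhat j k := by
      have := hest j k
      rw [h, sub_zero] at this
      linarith [hθlow j k]
    rw [hSThat_eq, hardThreshold_of_abs_lt hσ, h, sub_zero, abs_zero]
  have hrow (j) : ∑ k, |SThat j k - S j k| ≤ (2 * b + CU * ω) * s :=
    calc ∑ k, |SThat j k - S j k| ≤ #{k | S j k ≠ 0} • (2 * b + CU * ω) :=
          sum_le_card_filter_ne_zero_nsmul (hzero j) (hentry j)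
      _ ≤ s • (2 * b + CU * ω) := nsmul_le_nsmul_left (by positivity) (hsparse j)
      _ = (2 * b + CU * ω) * s := by rw [nsmul_eq_mul, mul_comm]
  have hbdd : BddAbove (Set.range fun j => ∑ k, |SThat j k - S j k|) :=
    (Set.finite_range _).bddAbove
  refine ⟨?_, Real.iSup_le hrow (by positivity)⟩
  unfold specNorm
  exact (hSThat.sub hS).norm_toEuclideanCLM_le_of_sum_norm_le
    (Real.iSup_nonneg fun j => sum_nonneg fun k _ => abs_nonneg _)
    fun j => by simpa only [Matrix.sub_apply, Real.norm_eq_abs] using le_ciSup hbdd j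

/-- Spectral-norm bound for the adaptive thresholding covariance estimator:
`‖Σ̂ᵀʰ − Σ‖₂ ≤ max_j Σ_k |Σ̂ᵀʰ_{jk} − σ_{jk}| ≤ (2b + C_U ω) s`. -/
theorem thresholding_spectral_bound {J : ℕ} (hJ : 0 < J)
    (SThat S σhat θhat : Matrix (Fin J) (Fin J) ℝ)
    (hSThat : SThat.IsHermitian) (hS : S.IsHermitian)
    (b ω CU : ℝ) (hb : 0 < b) (hω : 0 < ω) (hCU : 0 < CU) (s : ℕ)
    (hdef : ∀ j k, SThat j k = if ω * θhat j k ≤ |σhat j k| then σhat j k else 0)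
    (hest : ∀ j k, |σhat j k - S j k| ≤ b)
    (hθlow : ∀ j k, 2 * b < ω * θhat j k)
    (hθhigh : ∀ j k, θhat j k ≤ CU)
    (hsparse : ∀ j, (Finset.univ.filter fun k => S j k ≠ 0).card ≤ s) :
    specNorm (SThat - S) ≤ (⨆ j, ∑ k, |SThat j k - S j k|) ∧
      (⨆ j, ∑ k, |SThat j k - S j k|) ≤ (2 * b + CU * ω) * s :=
  thresholding_spectral_bound_general SThat S σhat θhat hSThat hS b ω CU hb hω hCU s hdef hest hθlow
    hθhigh hsparse
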